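/- Let (A,Δ) be an algebraic quantum group, B a non-degenerate algebra, and V a non-degenerate (invertible) corepresentation of (A,Δ) on B. Then (S⊙ι)(V) = V⁻¹, where (S⊙ι)(V) is the unique multiplier satisfying (S⊙ι)(V)(a⊗b) = (S⊙ι)((S⁻¹(a)⊗1)V(1⊗b)) for all a ∈ A, b ∈ B. -/

import Mathlib

open TensorProduct LinearMap

noncomputable section

/-- Slice on the left leg: `sliceL θ (x ⊗ y) = θ x • y`, i.e. `(θ ⊙ ι)`. -/
def sliceL {M N : Type*} [AddCommGroup M] [Module ℂ M] [AddCommGroup N] [Module ℂ N]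
    (θ : M →ₗ[ℂ] ℂ) : M ⊗[ℂ] N →ₗ[ℂ] N :=
  TensorProduct.lift (LinearMap.lsmul ℂ N ∘ₗ θ)

/-- Slice on the right leg: `sliceR θ (x ⊗ y) = θ y • x`, i.e. `(ι ⊙ θ)`. -/
def sliceR {M N : Type*} [AddCommGroup M] [Module ℂ M] [AddCommGroup N] [Module ℂ N]
    (θ : N →ₗ[ℂ] ℂ) : M ⊗[ℂ] N →ₗ[ℂ] M :=
  TensorProduct.lift ((LinearMap.lsmul ℂ M ∘ₗ θ).flip)

/-- An algebraic quantum group: a regular multiplier Hopf algebra `(A, Δ)` with a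
(faithful) left invariant functional `φ`.  The comultiplication is encoded through the
canonical bijections `T1 a ⊗ b = Δ(a)(b ⊗ 1)`, `T2 (a ⊗ b) = Δ(a)(1 ⊗ b)`,
`T3 (a ⊗ b) = (b ⊗ 1)Δ(a)`, `T4 (a ⊗ b) = (1 ⊗ b)Δ(a)` together with the left and right
multiplication operators `ΔL a`/`ΔR a` by `Δ(a)` on `A ⊗ A`. -/
structure AQG (A : Type*) [NonUnitalRing A] [Module ℂ A]
    [SMulCommClass ℂ A A] [IsScalarTower ℂ A A] where
  T1 : A ⊗[ℂ] A ≃ₗ[ℂ] A ⊗[ℂ] A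
  T2 : A ⊗[ℂ] A ≃ₗ[ℂ] A ⊗[ℂ] A
  T3 : A ⊗[ℂ] A ≃ₗ[ℂ] A ⊗[ℂ] A
  T4 : A ⊗[ℂ] A ≃ₗ[ℂ] A ⊗[ℂ] A
  counit : A →ₗ[ℂ] ℂ
  S : A ≃ₗ[ℂ] A
  phi : A →ₗ[ℂ] ℂ
  rho : A ≃ₗ[ℂ] A
  ΔL : A →ₗ[ℂ] (A ⊗[ℂ] A →ₗ[ℂ] A ⊗[ℂ] A)
  ΔR : A →ₗ[ℂ] (A ⊗[ℂ] A →ₗ[ℂ] A ⊗[ℂ] A)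
  /- non-degeneracy of the algebra `A` -/
  nondeg_l : ∀ a : A, (∀ b : A, a * b = 0) → a = 0
  nondeg_r : ∀ a : A, (∀ b : A, b * a = 0) → a = 0
  /- the counit is a non-zero homomorphism with `(ε ⊙ ι)Δ = (ι ⊙ ε)Δ = ι` -/
  counit_mul : ∀ a b : A, counit (a * b) = counit a * counit b
  counit_ne : counit ≠ 0
  counit_T1 : ∀ a b : A, sliceR counit (T1 (a ⊗ₜ b)) = a * b
  counit_T2 : ∀ a b : A, sliceL counit (T2 (a ⊗ₜ b)) = a * b
  counit_T3 : ∀ a b : A, sliceR counit (T3 (a ⊗ₜ b)) = b * a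
  counit_T4 : ∀ a b : A, sliceL counit (T4 (a ⊗ₜ b)) = b * a
  /- the antipode -/
  S_mul : ∀ a b : A, S (a * b) = S b * S a
  antipode_l : ∀ a b : A,
    LinearMap.mul' ℂ A (LinearMap.rTensor A S.toLinearMap (T2 (a ⊗ₜ b))) = counit a • b
  antipode_r : ∀ a b : A,
    LinearMap.mul' ℂ A (LinearMap.lTensor A S.toLinearMap (T3 (a ⊗ₜ b))) = counit a • b
  /- `φ` is a faithful left invariant functional -/
  phi_ne : phi ≠ 0
  phi_faithful_l : ∀ a : A, (∀ b : A, phi (a * b) = 0) → a = 0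
  phi_faithful_r : ∀ a : A, (∀ b : A, phi (b * a) = 0) → a = 0
  left_inv_T1 : ∀ a b : A, sliceR phi (T1 (a ⊗ₜ b)) = phi a • b
  left_inv_T3 : ∀ a b : A, sliceR phi (T3 (a ⊗ₜ b)) = phi a • b
  /- the weak KMS automorphism `ρ`: `φ(ab) = φ(b ρ(a))` -/
  rho_mul : ∀ a b : A, rho (a * b) = rho a * rho b
  phi_kms : ∀ a b : A, phi (a * b) = phi (b * rho a)
  /- `Δ` is a (non-degenerate) homomorphism into `M(A ⊗ A)` -/
  ΔL_mul : ∀ (a b : A) (z : A ⊗[ℂ] A), ΔL (a * b) z = ΔL a (ΔL b z)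
  ΔR_mul : ∀ (a b : A) (z : A ⊗[ℂ] A), ΔR (a * b) z = ΔR b (ΔR a z)
  ΔL_assoc : ∀ (a : A) (z w : A ⊗[ℂ] A), ΔL a (z * w) = ΔL a z * w
  ΔR_assoc : ∀ (a : A) (z w : A ⊗[ℂ] A), ΔR a (z * w) = z * ΔR a w
  ΔLR : ∀ (a : A) (z w : A ⊗[ℂ] A), ΔR a z * w = z * ΔL a w
  ΔL_T1 : ∀ (a b : A) (z : A ⊗[ℂ] A),
    T1 (a ⊗ₜ b) * z = ΔL a (TensorProduct.map (LinearMap.mulLeft ℂ b) LinearMap.id z)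
  ΔL_T2 : ∀ (a b : A) (z : A ⊗[ℂ] A),
    T2 (a ⊗ₜ b) * z = ΔL a (TensorProduct.map LinearMap.id (LinearMap.mulLeft ℂ b) z)
  ΔR_T3 : ∀ (a b : A) (z : A ⊗[ℂ] A),
    z * T3 (a ⊗ₜ b) = ΔR a (TensorProduct.map (LinearMap.mulRight ℂ b) LinearMap.id z)
  ΔR_T4 : ∀ (a b : A) (z : A ⊗[ℂ] A),
    z * T4 (a ⊗ₜ b) = ΔR a (TensorProduct.map LinearMap.id (LinearMap.mulRight ℂ b) z)
  /- coassociativity of `Δ` -/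
  coassoc : ∀ a b c : A,
    (TensorProduct.assoc ℂ A A A)
        (LinearMap.rTensor A (T3.toLinearMap ∘ₗ (TensorProduct.mk ℂ A A).flip a)
          (T2 (c ⊗ₜ b)))
      = LinearMap.lTensor A (T2.toLinearMap ∘ₗ (TensorProduct.mk ℂ A A).flip b)
          (T3 (c ⊗ₜ a))

namespace AQG

variable {A : Type*} [NonUnitalRing A] [Module ℂ A]
  [SMulCommClass ℂ A A] [IsScalarTower ℂ A A] (H : AQG A)

/-- The functional `φa : x ↦ φ(x a)`; the dual algebra is `Â = {φa : a ∈ A}`. -/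
def lFun (a : A) : A →ₗ[ℂ] ℂ := H.phi ∘ₗ LinearMap.mulRight ℂ a

/-- The functional `aφ : x ↦ φ(a x)`; also `Â = {aφ : a ∈ A}`. -/
def rFun (a : A) : A →ₗ[ℂ] ℂ := H.phi ∘ₗ LinearMap.mulLeft ℂ a

/-- The right invariant functional `ψ = φ ∘ S`. -/
def psi : A →ₗ[ℂ] ℂ := H.phi ∘ₗ H.S.toLinearMap

/-- The functional `ψa : x ↦ ψ(x a)`. -/
def lFunPsi (a : A) : A →ₗ[ℂ] ℂ := H.psi ∘ₗ LinearMap.mulRight ℂ a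

/-- The right action of `Â` on `A'`: `Ract θ a = θ · (φa)`,
`(θ (φa))(x) = θ((ι ⊙ φa)Δ(x)) = θ((ι ⊙ φ)(Δ(x)(1 ⊗ a)))`. -/
def Ract (θ : A →ₗ[ℂ] ℂ) (a : A) : A →ₗ[ℂ] ℂ :=
  θ ∘ₗ sliceR H.phi ∘ₗ H.T2.toLinearMap ∘ₗ (TensorProduct.mk ℂ A A).flip a

/-- The left action of `Â` on `A'`: `Lact θ a = (φa) · θ`,
`((φa) θ)(x) = θ((φa ⊙ ι)Δ(x)) = θ((φ ⊙ ι)(Δ(x)(a ⊗ 1)))`. -/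
def Lact (θ : A →ₗ[ℂ] ℂ) (a : A) : A →ₗ[ℂ] ℂ :=
  θ ∘ₗ sliceL H.phi ∘ₗ H.T1.toLinearMap ∘ₗ (TensorProduct.mk ℂ A A).flip a

/-- `c = (ι ⊙ θ)Δ(x)` as an element of `A` (a priori it is only a multiplier). -/
def IsRSlice (θ : A →ₗ[ℂ] ℂ) (x c : A) : Prop :=
  (∀ b : A, c * b = sliceR θ (H.T1 (x ⊗ₜ b))) ∧
  (∀ b : A, b * c = sliceR θ (H.T3 (x ⊗ₜ b)))

/-- `c = (θ ⊙ ι)Δ(x)` as an element of `A`. -/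
def IsLSlice (θ : A →ₗ[ℂ] ℂ) (x c : A) : Prop :=
  (∀ b : A, c * b = sliceL θ (H.T2 (x ⊗ₜ b))) ∧
  (∀ b : A, b * c = sliceL θ (H.T4 (x ⊗ₜ b)))

/-- `θ ∈ M(Â)`: all slices `(θ ⊙ ι)Δ(x)` and `(ι ⊙ θ)Δ(x)` belong to `A`. -/
def HasSlices (θ : A →ₗ[ℂ] ℂ) : Prop :=
  ∀ x : A, (∃ c, H.IsRSlice θ x c) ∧ (∃ c, H.IsLSlice θ x c)

end AQG

end

noncomputable section

/-- A (two-sided) multiplier of a non-degenerate algebra `C`. -/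
structure Mult (C : Type*) [NonUnitalRing C] [Module ℂ C]
    [SMulCommClass ℂ C C] [IsScalarTower ℂ C C] where
  L : C →ₗ[ℂ] C
  R : C →ₗ[ℂ] C
  mid : ∀ x y : C, R x * y = x * L y
  Lmul : ∀ x y : C, L (x * y) = L x * y
  Rmul : ∀ x y : C, R (x * y) = x * R y

/-- `W = V⁻¹` in `M(C)`. -/
def Mult.Inverts {C : Type*} [NonUnitalRing C] [Module ℂ C]
    [SMulCommClass ℂ C C] [IsScalarTower ℂ C C] (V W : Mult C) : Prop :=
  (∀ z, V.L (W.L z) = z) ∧ (∀ z, W.L (V.L z) = z) ∧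
  (∀ z, V.R (W.R z) = z) ∧ (∀ z, W.R (V.R z) = z)

namespace AQG

variable {A : Type*} [NonUnitalRing A] [Module ℂ A]
  [SMulCommClass ℂ A A] [IsScalarTower ℂ A A] (H : AQG A)
variable {B : Type*} [NonUnitalRing B] [Module ℂ B]
  [SMulCommClass ℂ B B] [IsScalarTower ℂ B B]

/-- The left action of `(Δ ⊙ ι)(z)` on `A ⊗ A ⊗ B`, for `z ∈ A ⊗ B`:
`(Δ(a) ⊗ b)·(u ⊗ c) = (Δ(a)u) ⊗ (bc)`. -/
def piDL : A ⊗[ℂ] B →ₗ[ℂ] ((A ⊗[ℂ] A) ⊗[ℂ] B →ₗ[ℂ] (A ⊗[ℂ] A) ⊗[ℂ] B) :=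
  TensorProduct.lift
    (((TensorProduct.mapBilinear (RingHom.id ℂ) (A ⊗[ℂ] A) B (A ⊗[ℂ] A) B).comp H.ΔL).compl₂
      (LinearMap.mul ℂ B))

/-- The right action of `(Δ ⊙ ι)(z)` on `A ⊗ A ⊗ B`. -/
def piDR : A ⊗[ℂ] B →ₗ[ℂ] ((A ⊗[ℂ] A) ⊗[ℂ] B →ₗ[ℂ] (A ⊗[ℂ] A) ⊗[ℂ] B) :=
  TensorProduct.lift
    (((TensorProduct.mapBilinear (RingHom.id ℂ) (A ⊗[ℂ] A) B (A ⊗[ℂ] A) B).comp H.ΔR).compl₂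
      ((LinearMap.mul ℂ B).flip))

/-- The leg-numbering map `V ↦ V₂₃` for the left action. -/
def leg23 (f : A ⊗[ℂ] B →ₗ[ℂ] A ⊗[ℂ] B) :
    (A ⊗[ℂ] A) ⊗[ℂ] B →ₗ[ℂ] (A ⊗[ℂ] A) ⊗[ℂ] B :=
  (TensorProduct.assoc ℂ A A B).symm.toLinearMap ∘ₗ
    (LinearMap.lTensor A f) ∘ₗ (TensorProduct.assoc ℂ A A B).toLinearMap

/-- The flip of the first two legs of `A ⊗ A ⊗ B`. -/
def swap12 : (A ⊗[ℂ] A) ⊗[ℂ] B ≃ₗ[ℂ] (A ⊗[ℂ] A) ⊗[ℂ] B :=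
  TensorProduct.congr (TensorProduct.comm ℂ A A) (LinearEquiv.refl ℂ B)

/-- The leg-numbering map `V ↦ V₁₃`. -/
def leg13 (f : A ⊗[ℂ] B →ₗ[ℂ] A ⊗[ℂ] B) :
    (A ⊗[ℂ] A) ⊗[ℂ] B →ₗ[ℂ] (A ⊗[ℂ] A) ⊗[ℂ] B :=
  (swap12 (A := A) (B := B)).toLinearMap ∘ₗ leg23 f ∘ₗ
    (swap12 (A := A) (B := B)).toLinearMap

/-- `V ∈ M(A ⊙ B)` is a corepresentation of `(A, Δ)` on `B`:
`(Δ ⊙ ι)(V) = V₁₃ V₂₃` in `M(A ⊙ A ⊙ B)`, expressed on the (spanning) elements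
`(Δ ⊙ ι)(z) w` and `w (Δ ⊙ ι)(z)`. -/
def IsCorep (V : Mult (A ⊗[ℂ] B)) : Prop :=
  (∀ (z : A ⊗[ℂ] B) (w : (A ⊗[ℂ] A) ⊗[ℂ] B),
    H.piDL (V.L z) w = leg13 V.L (leg23 V.L (H.piDL z w))) ∧
  (∀ (z : A ⊗[ℂ] B) (w : (A ⊗[ℂ] A) ⊗[ℂ] B),
    H.piDR (V.R z) w = leg23 V.R (leg13 V.R (H.piDR z w)))

end AQG

end

/-!
Since `V` is invertible it suffices to show `V (S ⊙ ι)(u) = a ⊗ b` and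
`(S ⊙ ι)(v) V = a ⊗ b`. Applying `ε` to the middle leg of `(Δ ⊙ ι)(V) = V₁₃ V₂₃` and
cancelling `V` gives `(ε ⊙ ι)(V) = 1`. Applying `m(S ⊙ ι) ⊙ ι` to the first two legs instead,
and using `m(S ⊙ ι)(Δ(p)(x ⊗ y)) = ε(p) S(x) y`, the identity `(ε ⊙ ι)(V) = 1` yields
`(m(S ⊙ ι) ⊙ ι)(V₁₃ V₂₃ ζ) = (m(S ⊙ ι) ⊙ ι)(ζ)`. For `v = (1 ⊗ b) V (S⁻¹(a) ⊗ 1)` this gives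
`(S ⊙ ι)(v) V (y ⊗ c) = (1 ⊗ b)(m(S ⊙ ι) ⊙ ι)(V₁₃ V₂₃ (S⁻¹(a) ⊗ y ⊗ c)) = (a ⊗ b)(y ⊗ c)`,
and symmetrically for `u`. Linear identities on `A ⊙ A` are checked on the spanning elements
`Δ(p)(x ⊗ y)`, and identities in `A ⊙ B` against the elements `y ⊗ c` by non-degeneracy.
-/

section Slices

variable {M N : Type*} [AddCommGroup M] [Module ℂ M] [AddCommGroup N] [Module ℂ N]

@[simp] lemma sliceL_tmul (θ : M →ₗ[ℂ] ℂ) (x : M) (y : N) :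
    sliceL θ (x ⊗ₜ y) = θ x • y := rfl

@[simp] lemma sliceR_tmul (θ : N →ₗ[ℂ] ℂ) (x : M) (y : N) :
    sliceR θ (x ⊗ₜ y) = θ y • x := rfl

lemma sliceL_eq_sliceR_comm (θ : M →ₗ[ℂ] ℂ) (t : M ⊗[ℂ] N) :
    sliceL θ t = sliceR θ (TensorProduct.comm ℂ M N t) := by
  induction t using TensorProduct.induction_on <;> simp_all

lemma sliceR_map_id_left (θ : N →ₗ[ℂ] ℂ) (g : M →ₗ[ℂ] M) (t : M ⊗[ℂ] N) :
    sliceR θ (map g id t) = g (sliceR θ t) := by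
  induction t using TensorProduct.induction_on <;> simp_all

lemma sliceL_map_id_right (θ : M →ₗ[ℂ] ℂ) (h : N →ₗ[ℂ] N) (t : M ⊗[ℂ] N) :
    sliceL θ (map id h t) = h (sliceL θ t) := by
  induction t using TensorProduct.induction_on <;> simp_all

lemma eq_zero_of_forall_sliceR_eq_zero {t : M ⊗[ℂ] N}
    (h : ∀ θ : N →ₗ[ℂ] ℂ, sliceR θ t = 0) : t = 0 := by
  classical
  let b := Module.Basis.ofVectorSpace ℂ N
  let e := (TensorProduct.congr (LinearEquiv.refl ℂ M) b.repr).trans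
    (finsuppScalarRight ℂ ℂ M _)
  have he : ∀ i s, e s i = sliceR (b.coord i) s := by
    intro i s
    induction s using TensorProduct.induction_on with
    | zero => simp
    | tmul x y => simp [e, finsuppScalarRight_apply_tmul_apply, Module.Basis.coord_apply]
    | add u v hu hv => simp [hu, hv]
  exact e.map_eq_zero_iff.mp (Finsupp.ext fun i => by simp [he, h])

lemma eq_zero_of_forall_sliceL_eq_zero {t : M ⊗[ℂ] N}
    (h : ∀ θ : M →ₗ[ℂ] ℂ, sliceL θ t = 0) : t = 0 := by
  simp only [sliceL_eq_sliceR_comm] at h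
  simpa using eq_zero_of_forall_sliceR_eq_zero h

lemma tmul_right_injective_of_ne_zero {x : M} (hx : x ≠ 0) :
    Function.Injective (x ⊗ₜ[ℂ] · : N → M ⊗[ℂ] N) := by
  intro y y' h
  obtain ⟨θ, hθ⟩ := Module.Projective.exists_dual_eq_one ℂ hx
  simpa [hθ] using congrArg (sliceL θ) h

lemma eq_zero_of_forall_map_left_eq_zero {ι : Type*} {g : ι → M →ₗ[ℂ] M}
    (hg : ∀ x, (∀ i, g i x = 0) → x = 0) {t : M ⊗[ℂ] N} (h : ∀ i, map (g i) id t = 0) :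
    t = 0 :=
  eq_zero_of_forall_sliceR_eq_zero fun θ => hg _ fun i => by
    rw [← sliceR_map_id_left, h, map_zero]

lemma eq_zero_of_forall_map_right_eq_zero {ι : Type*} {h : ι → N →ₗ[ℂ] N}
    (hh : ∀ y, (∀ i, h i y = 0) → y = 0) {t : M ⊗[ℂ] N} (ht : ∀ i, map id (h i) t = 0) :
    t = 0 :=
  eq_zero_of_forall_sliceL_eq_zero fun θ => hh _ fun i => by
    rw [← sliceL_map_id_right, ht, map_zero]

end Slices

section Multiplication

variable {R S : Type*} [NonUnitalRing R] [Module ℂ R] [SMulCommClass ℂ R R]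
  [IsScalarTower ℂ R R] [NonUnitalRing S] [Module ℂ S] [SMulCommClass ℂ S S]
  [IsScalarTower ℂ S S]

lemma mul_tmul_eq_map (t : R ⊗[ℂ] S) (a : R) (b : S) :
    t * (a ⊗ₜ b) = map (mulRight ℂ a) (mulRight ℂ b) t := by
  induction t using TensorProduct.induction_on <;>
    simp_all [Algebra.TensorProduct.tmul_mul_tmul, add_mul]

lemma tmul_mul_eq_map (t : R ⊗[ℂ] S) (a : R) (b : S) :
    (a ⊗ₜ b) * t = map (mulLeft ℂ a) (mulLeft ℂ b) t := by
  induction t using TensorProduct.induction_on <;>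
    simp_all [Algebra.TensorProduct.tmul_mul_tmul, mul_add]

lemma map_id_mulRight_mul (c : S) (t t' : R ⊗[ℂ] S) :
    map id (mulRight ℂ c) t * t' = t * map id (mulLeft ℂ c) t' := by
  induction t using TensorProduct.induction_on with
  | zero => simp
  | add u v hu hv => simp only [map_add, add_mul, hu, hv]
  | tmul x y =>
    induction t' using TensorProduct.induction_on <;>
      simp_all [Algebra.TensorProduct.tmul_mul_tmul, mul_add, mul_assoc]

lemma map_mulRight_id_mul (c : R) (t t' : R ⊗[ℂ] S) :
    map (mulRight ℂ c) id t * t' = t * map (mulLeft ℂ c) id t' := by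
  induction t using TensorProduct.induction_on with
  | zero => simp
  | add u v hu hv => simp only [map_add, add_mul, hu, hv]
  | tmul x y =>
    induction t' using TensorProduct.induction_on <;>
      simp_all [Algebra.TensorProduct.tmul_mul_tmul, mul_add, mul_assoc]

lemma map_id_mulLeft_mul (c : S) (t t' : R ⊗[ℂ] S) :
    map id (mulLeft ℂ c) t * t' = map id (mulLeft ℂ c) (t * t') := by
  induction t using TensorProduct.induction_on with
  | zero => simp
  | add u v hu hv => simp only [map_add, add_mul, hu, hv]
  | tmul x y =>
    induction t' using TensorProduct.induction_on <;>
      simp_all [Algebra.TensorProduct.tmul_mul_tmul, mul_add, mul_assoc]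

lemma mul_map_id_mulRight (c : S) (t t' : R ⊗[ℂ] S) :
    t' * map id (mulRight ℂ c) t = map id (mulRight ℂ c) (t' * t) := by
  induction t using TensorProduct.induction_on with
  | zero => simp
  | add u v hu hv => simp only [map_add, mul_add, hu, hv]
  | tmul x y =>
    induction t' using TensorProduct.induction_on <;>
      simp_all [Algebra.TensorProduct.tmul_mul_tmul, add_mul, mul_assoc]

/-- Products `z * w` suffice on the right leg, although `S` need not be spanned by them. -/
lemma eq_of_forall_mul_tmul_mul (hR : ∀ a : R, (∀ b, a * b = 0) → a = 0)
    (hS : ∀ a : S, (∀ b, a * b = 0) → a = 0) {t t' : R ⊗[ℂ] S}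
    (h : ∀ (y : R) (z w : S), t * (y ⊗ₜ (z * w)) = t' * (y ⊗ₜ (z * w))) : t = t' := by
  rw [← sub_eq_zero]
  refine eq_zero_of_forall_map_right_eq_zero (h := fun z => mulRight ℂ z) hS fun z => ?_
  refine eq_zero_of_forall_map_right_eq_zero (h := fun w => mulRight ℂ w) hS fun w => ?_
  refine eq_zero_of_forall_map_left_eq_zero (g := fun y => mulRight ℂ y) hR fun y => ?_
  have hmap : map (mulRight ℂ y) (mulRight ℂ (z * w)) =
      map (mulRight ℂ y) id ∘ₗ map id (mulRight ℂ w) ∘ₗ map id (mulRight ℂ z) :=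
    TensorProduct.ext' fun a b => by simp [mul_assoc]
  have := h y z w
  rwa [← sub_eq_zero, ← sub_mul, mul_tmul_eq_map, hmap] at this

lemma eq_of_forall_tmul_mul_mul (hR : ∀ a : R, (∀ b, b * a = 0) → a = 0)
    (hS : ∀ a : S, (∀ b, b * a = 0) → a = 0) {t t' : R ⊗[ℂ] S}
    (h : ∀ (y : R) (z w : S), (y ⊗ₜ (z * w)) * t = (y ⊗ₜ (z * w)) * t') : t = t' := by
  rw [← sub_eq_zero]
  refine eq_zero_of_forall_map_right_eq_zero (h := fun w => mulLeft ℂ w) hS fun w => ?_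
  refine eq_zero_of_forall_map_right_eq_zero (h := fun z => mulLeft ℂ z) hS fun z => ?_
  refine eq_zero_of_forall_map_left_eq_zero (g := fun y => mulLeft ℂ y) hR fun y => ?_
  have hmap : map (mulLeft ℂ y) (mulLeft ℂ (z * w)) =
      map (mulLeft ℂ y) id ∘ₗ map id (mulLeft ℂ z) ∘ₗ map id (mulLeft ℂ w) :=
    TensorProduct.ext' fun a b => by simp
  have := h y z w
  rwa [← sub_eq_zero, ← mul_sub, tmul_mul_eq_map, hmap] at this

end Multiplication

namespace Mult

variable {R S : Type*} [NonUnitalRing R] [Module ℂ R] [SMulCommClass ℂ R R]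
  [IsScalarTower ℂ R R] [NonUnitalRing S] [Module ℂ S] [SMulCommClass ℂ S S]
  [IsScalarTower ℂ S S] (V : Mult (R ⊗[ℂ] S))

lemma L_map_id_mulRight (hR : ∀ a : R, (∀ b, a * b = 0) → a = 0)
    (hS : ∀ a : S, (∀ b, a * b = 0) → a = 0) (c : S) (t : R ⊗[ℂ] S) :
    V.L (map id (mulRight ℂ c) t) = map id (mulRight ℂ c) (V.L t) :=
  eq_of_forall_mul_tmul_mul hR hS fun _ _ _ => by
    rw [← V.Lmul, map_id_mulRight_mul, map_id_mulRight_mul, V.Lmul]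

lemma R_map_id_mulLeft (hR : ∀ a : R, (∀ b, b * a = 0) → a = 0)
    (hS : ∀ a : S, (∀ b, b * a = 0) → a = 0) (c : S) (t : R ⊗[ℂ] S) :
    V.R (map id (mulLeft ℂ c) t) = map id (mulLeft ℂ c) (V.R t) :=
  eq_of_forall_tmul_mul_mul hR hS fun _ _ _ => by
    rw [← V.Rmul, ← map_id_mulRight_mul, ← map_id_mulRight_mul, V.Rmul]

/-- If `w = (1 ⊗ b) V (x ⊗ 1)`, then `w (1 ⊗ c) = (1 ⊗ b) V (x ⊗ c)`. -/
lemma map_id_mulRight_of_forall_mul_eq (hR : ∀ a : R, (∀ b, a * b = 0) → a = 0)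
    (hS : ∀ a : S, (∀ b, a * b = 0) → a = 0) {w : R ⊗[ℂ] S} {x : R} {b : S}
    (hw : ∀ z, w * z = map id (mulLeft ℂ b) (V.L (map (mulLeft ℂ x) id z))) (c : S) :
    map id (mulRight ℂ c) w = map id (mulLeft ℂ b) (V.L (x ⊗ₜ c)) :=
  eq_of_forall_mul_tmul_mul hR hS fun _ _ _ => by
    rw [map_id_mulRight_mul, hw, map_map, id_comp, comp_id, ← tmul_mul_eq_map, V.Lmul,
      map_id_mulLeft_mul]

/-- If `w = (x ⊗ 1) V (1 ⊗ b)`, then `(1 ⊗ c) w = (x ⊗ c) V (1 ⊗ b)`. -/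
lemma map_id_mulLeft_of_forall_mul_eq (hR : ∀ a : R, (∀ b, b * a = 0) → a = 0)
    (hS : ∀ a : S, (∀ b, b * a = 0) → a = 0) {w : R ⊗[ℂ] S} {x : R} {b : S}
    (hw : ∀ z, z * w = map id (mulRight ℂ b) (V.R (map (mulRight ℂ x) id z))) (c : S) :
    map id (mulLeft ℂ c) w = map id (mulRight ℂ b) (V.R (x ⊗ₜ c)) :=
  eq_of_forall_tmul_mul_mul hR hS fun _ _ _ => by
    rw [← map_id_mulRight_mul, hw, map_map, id_comp, comp_id, ← mul_tmul_eq_map, V.Rmul,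
      mul_map_id_mulRight]

end Mult

namespace AQG

section Antipode

variable {A : Type*} [NonUnitalRing A] [Module ℂ A] [SMulCommClass ℂ A A]
  [IsScalarTower ℂ A A] (H : AQG A)

def mulAntipodeLeft : A ⊗[ℂ] A →ₗ[ℂ] A :=
  LinearMap.mul' ℂ A ∘ₗ map H.S.toLinearMap id

def mulAntipodeRight : A ⊗[ℂ] A →ₗ[ℂ] A :=
  LinearMap.mul' ℂ A ∘ₗ map id H.S.toLinearMap

@[simp] lemma mulAntipodeLeft_tmul (a b : A) : H.mulAntipodeLeft (a ⊗ₜ b) = H.S a * b := by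
  simp [mulAntipodeLeft]

@[simp] lemma mulAntipodeRight_tmul (a b : A) : H.mulAntipodeRight (a ⊗ₜ b) = a * H.S b := by
  simp [mulAntipodeRight]

lemma exists_counit_ne_zero : ∃ e, H.counit e ≠ 0 := by
  by_contra! h
  exact H.counit_ne (LinearMap.ext h)

include H in
/-- `A = A²`: from `(ι ⊙ ε)(Δ(a)(b ⊗ 1)) = ab` and the surjectivity of `T1`. -/
lemma span_mul_eq_top : Submodule.span ℂ {z : A | ∃ x y, x * y = z} = ⊤ := by
  refine Submodule.eq_top_iff'.mpr fun y => ?_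
  obtain ⟨e, he⟩ := H.exists_counit_ne_zero
  have hmem (t) : sliceR H.counit (H.T1 t) ∈ Submodule.span ℂ {z : A | ∃ x y, x * y = z} := by
    induction t using TensorProduct.induction_on with
    | zero => simp
    | tmul a b => exact Submodule.subset_span ⟨a, b, (H.counit_T1 a b).symm⟩
    | add s s' hs hs' => simpa using Submodule.add_mem _ hs hs'
  have := Submodule.smul_mem _ (H.counit e)⁻¹ (hmem (H.T1.symm (y ⊗ₜ e)))
  simpa [he] using this

include H in
lemma ext_of_mul {M : Type*} [AddCommGroup M] [Module ℂ M] {f g : A →ₗ[ℂ] M}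
    (h : ∀ x y, f (x * y) = g (x * y)) : f = g :=
  LinearMap.ext_on H.span_mul_eq_top (by rintro _ ⟨x, y, rfl⟩; exact h x y)

include H in
lemma map_mem_of_forall_map_mul_mem {M : Type*} [AddCommGroup M] [Module ℂ M]
    {P : Submodule ℂ M} (f : A →ₗ[ℂ] M) (h : ∀ x y, f (x * y) ∈ P) (z : A) :
    f z ∈ P := by
  have : Submodule.span ℂ {z : A | ∃ x y, x * y = z} ≤ P.comap f :=
    Submodule.span_le.mpr (by rintro _ ⟨x, y, rfl⟩; exact h x y)
  exact (H.span_mul_eq_top ▸ this) Submodule.mem_top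

include H in
lemma eq_top_of_mul_tmul_mul_mem {P : Submodule ℂ (A ⊗[ℂ] A)}
    (h : ∀ u v e f : A, (u * v) ⊗ₜ (e * f) ∈ P) : P = ⊤ := by
  have h₁ (x e f : A) : x ⊗ₜ (e * f) ∈ P :=
    H.map_mem_of_forall_map_mul_mem ((TensorProduct.mk ℂ A A).flip (e * f))
      (fun u v => h u v e f) x
  have h₂ (x y : A) : x ⊗ₜ y ∈ P :=
    H.map_mem_of_forall_map_mul_mem (TensorProduct.mk ℂ A A x) (h₁ x) y
  rw [eq_top_iff, ← span_tmul_eq_top]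
  exact Submodule.span_le.mpr (by rintro _ ⟨x, y, rfl⟩; exact h₂ x y)

lemma span_ΔL_eq_top :
    Submodule.span ℂ {w : A ⊗[ℂ] A | ∃ p x y, H.ΔL p (x ⊗ₜ y) = w} = ⊤ := by
  refine H.eq_top_of_mul_tmul_mul_mem fun u v e f => ?_
  rw [← Algebra.TensorProduct.tmul_mul_tmul, ← H.T2.apply_symm_apply (u ⊗ₜ e)]
  induction H.T2.symm (u ⊗ₜ e) using TensorProduct.induction_on with
  | zero => simp
  | tmul p b => exact Submodule.subset_span ⟨p, v, b * f, by simp [H.ΔL_T2]⟩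
  | add s s' hs hs' => simpa [add_mul] using Submodule.add_mem _ hs hs'

lemma span_ΔR_eq_top :
    Submodule.span ℂ {w : A ⊗[ℂ] A | ∃ p x y, H.ΔR p (x ⊗ₜ y) = w} = ⊤ := by
  refine H.eq_top_of_mul_tmul_mul_mem fun u v e f => ?_
  rw [← Algebra.TensorProduct.tmul_mul_tmul, ← H.T4.apply_symm_apply (v ⊗ₜ f)]
  induction H.T4.symm (v ⊗ₜ f) using TensorProduct.induction_on with
  | zero => simp
  | tmul p b => exact Submodule.subset_span ⟨p, u, e * b, by simp [H.ΔR_T4]⟩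
  | add s s' hs hs' => simpa [mul_add] using Submodule.add_mem _ hs hs'

lemma ext_ΔL {M : Type*} [AddCommGroup M] [Module ℂ M] {f g : A ⊗[ℂ] A →ₗ[ℂ] M}
    (h : ∀ p x y, f (H.ΔL p (x ⊗ₜ y)) = g (H.ΔL p (x ⊗ₜ y))) : f = g :=
  LinearMap.ext_on H.span_ΔL_eq_top (by rintro _ ⟨p, x, y, rfl⟩; exact h p x y)

lemma ext_ΔR {M : Type*} [AddCommGroup M] [Module ℂ M] {f g : A ⊗[ℂ] A →ₗ[ℂ] M}
    (h : ∀ p x y, f (H.ΔR p (x ⊗ₜ y)) = g (H.ΔR p (x ⊗ₜ y))) : f = g :=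
  LinearMap.ext_on H.span_ΔR_eq_top (by rintro _ ⟨p, x, y, rfl⟩; exact h p x y)

lemma mulAntipodeLeft_T2 (a b : A) : H.mulAntipodeLeft (H.T2 (a ⊗ₜ b)) = H.counit a • b :=
  H.antipode_l a b

lemma mulAntipodeRight_T3 (a b : A) : H.mulAntipodeRight (H.T3 (a ⊗ₜ b)) = H.counit a • b :=
  H.antipode_r a b

lemma mulAntipodeLeft_mul_tmul (t : A ⊗[ℂ] A) (x y : A) :
    H.mulAntipodeLeft (t * (x ⊗ₜ y)) = H.S x * H.mulAntipodeLeft t * y := by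
  induction t using TensorProduct.induction_on with
  | zero => simp
  | tmul a b => simp [Algebra.TensorProduct.tmul_mul_tmul, H.S_mul, mul_assoc]
  | add u v hu hv => simp only [add_mul, map_add, hu, hv, mul_add]

lemma mulAntipodeRight_tmul_mul (t : A ⊗[ℂ] A) (x y : A) :
    H.mulAntipodeRight ((x ⊗ₜ y) * t) = x * H.mulAntipodeRight t * H.S y := by
  induction t using TensorProduct.induction_on with
  | zero => simp
  | tmul a b => simp [Algebra.TensorProduct.tmul_mul_tmul, H.S_mul, mul_assoc]
  | add u v hu hv => simp only [mul_add, map_add, hu, hv, add_mul]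

lemma mulAntipodeRight_map_mulLeft_id (b : A) (t : A ⊗[ℂ] A) :
    H.mulAntipodeRight (map (mulLeft ℂ b) id t) = b * H.mulAntipodeRight t := by
  induction t using TensorProduct.induction_on <;> simp_all [mul_assoc, mul_add]

lemma mulAntipodeRight_map_id_mulLeft (y : A) (t : A ⊗[ℂ] A) :
    H.mulAntipodeRight (map id (mulLeft ℂ y) t) = H.mulAntipodeRight t * H.S y := by
  induction t using TensorProduct.induction_on <;> simp_all [H.S_mul, mul_assoc, add_mul]

/-- Both sides are `(b ⊗ y) Δ(a)`. -/
lemma map_mulLeft_id_T4 (a y b : A) :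
    map (mulLeft ℂ b) id (H.T4 (a ⊗ₜ y)) = map id (mulLeft ℂ y) (H.T3 (a ⊗ₜ b)) := by
  refine eq_of_forall_tmul_mul_mul H.nondeg_r H.nondeg_r fun x z w => ?_
  rw [← map_mulRight_id_mul, H.ΔR_T4, ← map_id_mulRight_mul, H.ΔR_T3, map_map, map_map]
  simp

lemma mulAntipodeRight_T4 (a y : A) :
    H.mulAntipodeRight (H.T4 (a ⊗ₜ y)) = H.counit a • H.S y := by
  refine sub_eq_zero.mp (H.nondeg_r _ fun b => ?_)
  rw [mul_sub, sub_eq_zero, ← mulAntipodeRight_map_mulLeft_id, map_mulLeft_id_T4,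
    mulAntipodeRight_map_id_mulLeft, mulAntipodeRight_T3, smul_mul_assoc, mul_smul_comm]

lemma mulAntipodeLeft_ΔL (p x y : A) :
    H.mulAntipodeLeft (H.ΔL p (x ⊗ₜ y)) = H.counit p • (H.S x * y) := by
  refine LinearMap.congr_fun (H.ext_of_mul (g := H.counit p • mulLeft ℂ (H.S x))
    (f := H.mulAntipodeLeft ∘ₗ H.ΔL p ∘ₗ TensorProduct.mk ℂ A A x) fun u v => ?_) y
  have : H.ΔL p (x ⊗ₜ (u * v)) = H.T2 (p ⊗ₜ u) * (x ⊗ₜ v) := by simp [H.ΔL_T2]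
  simp [this, mulAntipodeLeft_mul_tmul, mulAntipodeLeft_T2, mul_assoc, smul_mul_assoc,
    mul_smul_comm]

lemma mulAntipodeRight_ΔR (p x y : A) :
    H.mulAntipodeRight (H.ΔR p (x ⊗ₜ y)) = H.counit p • (x * H.S y) := by
  refine LinearMap.congr_fun
    (H.ext_of_mul (g := H.counit p • mulLeft ℂ x ∘ₗ H.S.toLinearMap)
    (f := H.mulAntipodeRight ∘ₗ H.ΔR p ∘ₗ TensorProduct.mk ℂ A A x) fun u v => ?_) y
  have : H.ΔR p (x ⊗ₜ (u * v)) = (x ⊗ₜ u) * H.T4 (p ⊗ₜ v) := by simp [H.ΔR_T4]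
  simp [this, mulAntipodeRight_tmul_mul, mulAntipodeRight_T4, H.S_mul, mul_assoc,
    smul_mul_assoc, mul_smul_comm]

lemma sliceR_counit_mul_tmul (t : A ⊗[ℂ] A) (x y : A) :
    sliceR H.counit (t * (x ⊗ₜ y)) = H.counit y • (sliceR H.counit t * x) := by
  induction t using TensorProduct.induction_on with
  | zero => simp
  | tmul a b =>
    simp only [Algebra.TensorProduct.tmul_mul_tmul, sliceR_tmul, H.counit_mul, smul_mul_assoc,
      mul_smul, smul_comm (H.counit b)]
  | add u v hu hv => simp only [add_mul, map_add, hu, hv, smul_add]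

lemma sliceL_counit_tmul_mul (t : A ⊗[ℂ] A) (x y : A) :
    sliceL H.counit ((x ⊗ₜ y) * t) = H.counit x • (y * sliceL H.counit t) := by
  induction t using TensorProduct.induction_on with
  | zero => simp
  | tmul a b =>
    simp only [Algebra.TensorProduct.tmul_mul_tmul, sliceL_tmul, H.counit_mul, mul_smul,
      mul_smul_comm]
  | add u v hu hv => simp only [mul_add, map_add, hu, hv, smul_add]

lemma sliceR_counit_ΔL (p x y : A) :
    sliceR H.counit (H.ΔL p (x ⊗ₜ y)) = H.counit y • (p * x) := by
  refine LinearMap.congr_fun (H.ext_of_mul (g := H.counit y • mulLeft ℂ p)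
    (f := sliceR H.counit ∘ₗ H.ΔL p ∘ₗ (TensorProduct.mk ℂ A A).flip y) fun u v => ?_) x
  have : H.ΔL p ((u * v) ⊗ₜ y) = H.T1 (p ⊗ₜ u) * (v ⊗ₜ y) := by simp [H.ΔL_T1]
  simp [this, sliceR_counit_mul_tmul, H.counit_T1, mul_assoc]

lemma sliceL_counit_ΔR (p x y : A) :
    sliceL H.counit (H.ΔR p (x ⊗ₜ y)) = H.counit x • (y * p) := by
  refine LinearMap.congr_fun (H.ext_of_mul (g := H.counit x • mulRight ℂ p)
    (f := sliceL H.counit ∘ₗ H.ΔR p ∘ₗ TensorProduct.mk ℂ A A x) fun u v => ?_) y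
  have : H.ΔR p (x ⊗ₜ (u * v)) = (x ⊗ₜ u) * H.T4 (p ⊗ₜ v) := by simp [H.ΔR_T4]
  simp [this, sliceL_counit_tmul_mul, H.counit_T4, mul_assoc]

end Antipode

section Legs

variable {A B : Type*} [NonUnitalRing A] [Module ℂ A] [NonUnitalRing B] [Module ℂ B]

def insertLeg1 (x : A) : A ⊗[ℂ] B →ₗ[ℂ] (A ⊗[ℂ] A) ⊗[ℂ] B :=
  (TensorProduct.assoc ℂ A A B).symm.toLinearMap ∘ₗ TensorProduct.mk ℂ A (A ⊗[ℂ] B) x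

def insertLeg2 (x : A) : A ⊗[ℂ] B →ₗ[ℂ] (A ⊗[ℂ] A) ⊗[ℂ] B :=
  swap12.toLinearMap ∘ₗ insertLeg1 x

@[simp] lemma insertLeg1_tmul (x y : A) (c : B) :
    insertLeg1 x (y ⊗ₜ c) = (x ⊗ₜ y) ⊗ₜ c := rfl

@[simp] lemma insertLeg2_tmul (x y : A) (c : B) :
    insertLeg2 x (y ⊗ₜ c) = (y ⊗ₜ x) ⊗ₜ c := rfl

lemma leg23_tmul (f : A ⊗[ℂ] B →ₗ[ℂ] A ⊗[ℂ] B) (x y : A) (c : B) :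
    leg23 f ((x ⊗ₜ y) ⊗ₜ c) = insertLeg1 x (f (y ⊗ₜ c)) := rfl

lemma leg13_tmul (f : A ⊗[ℂ] B →ₗ[ℂ] A ⊗[ℂ] B) (x y : A) (c : B) :
    leg13 f ((x ⊗ₜ y) ⊗ₜ c) = insertLeg2 y (f (x ⊗ₜ c)) := rfl

end Legs

variable {A : Type*} [NonUnitalRing A] [Module ℂ A] [SMulCommClass ℂ A A]
  [IsScalarTower ℂ A A] (H : AQG A)
  {B : Type*} [NonUnitalRing B] [Module ℂ B]

lemma rTensor_sliceR_counit_insertLeg2 (x : A) (t : A ⊗[ℂ] B) :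
    rTensor B (sliceR H.counit) (insertLeg2 x t) = H.counit x • t := by
  induction t using TensorProduct.induction_on <;> simp_all [TensorProduct.smul_tmul']

lemma rTensor_sliceR_counit_insertLeg1 (x : A) (t : A ⊗[ℂ] B) :
    rTensor B (sliceR H.counit) (insertLeg1 x t) = x ⊗ₜ sliceL H.counit t := by
  induction t using TensorProduct.induction_on <;> simp_all [TensorProduct.smul_tmul', tmul_add]

lemma rTensor_sliceL_counit_insertLeg1 (x : A) (t : A ⊗[ℂ] B) :
    rTensor B (sliceL H.counit) (insertLeg1 x t) = H.counit x • t := by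
  induction t using TensorProduct.induction_on <;> simp_all [TensorProduct.smul_tmul']

lemma rTensor_sliceL_counit_insertLeg2 (x : A) (t : A ⊗[ℂ] B) :
    rTensor B (sliceL H.counit) (insertLeg2 x t) = x ⊗ₜ sliceL H.counit t := by
  induction t using TensorProduct.induction_on <;> simp_all [TensorProduct.smul_tmul', tmul_add]

lemma rTensor_mulAntipodeLeft_insertLeg2 (x : A) (t : A ⊗[ℂ] B) :
    rTensor B H.mulAntipodeLeft (insertLeg2 x t) =
      map (mulRight ℂ x) id (map H.S.toLinearMap id t) := by
  induction t using TensorProduct.induction_on <;> simp_all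

lemma rTensor_mulAntipodeRight_insertLeg1 (x : A) (t : A ⊗[ℂ] B) :
    rTensor B H.mulAntipodeRight (insertLeg1 x t) =
      map (mulLeft ℂ x) id (map H.S.toLinearMap id t) := by
  induction t using TensorProduct.induction_on <;> simp_all

lemma rTensor_sliceR_counit_leg13 (f : A ⊗[ℂ] B →ₗ[ℂ] A ⊗[ℂ] B)
    (t : (A ⊗[ℂ] A) ⊗[ℂ] B) :
    rTensor B (sliceR H.counit) (leg13 f t) = f (rTensor B (sliceR H.counit) t) := by
  induction t using TensorProduct.induction_on with
  | zero => simp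
  | add u v hu hv => simp only [map_add, hu, hv]
  | tmul u c =>
    induction u using TensorProduct.induction_on with
    | zero => simp
    | add u' v' hu' hv' => simp only [add_tmul, map_add, hu', hv']
    | tmul x y => simp [leg13_tmul, rTensor_sliceR_counit_insertLeg2, ← TensorProduct.smul_tmul']

lemma rTensor_sliceL_counit_leg23 (f : A ⊗[ℂ] B →ₗ[ℂ] A ⊗[ℂ] B)
    (t : (A ⊗[ℂ] A) ⊗[ℂ] B) :
    rTensor B (sliceL H.counit) (leg23 f t) = f (rTensor B (sliceL H.counit) t) := by
  induction t using TensorProduct.induction_on with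
  | zero => simp
  | add u v hu hv => simp only [map_add, hu, hv]
  | tmul u c =>
    induction u using TensorProduct.induction_on with
    | zero => simp
    | add u' v' hu' hv' => simp only [add_tmul, map_add, hu', hv']
    | tmul x y => simp [leg23_tmul, rTensor_sliceL_counit_insertLeg1, ← TensorProduct.smul_tmul']

variable [SMulCommClass ℂ B B] [IsScalarTower ℂ B B]

lemma piDL_tmul_tmul (p : A) (q : B) (x y : A) (c : B) :
    H.piDL (p ⊗ₜ q) ((x ⊗ₜ y) ⊗ₜ c) = H.ΔL p (x ⊗ₜ y) ⊗ₜ (q * c) := rfl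

lemma piDR_tmul_tmul (p : A) (q : B) (x y : A) (c : B) :
    H.piDR (p ⊗ₜ q) ((x ⊗ₜ y) ⊗ₜ c) = H.ΔR p (x ⊗ₜ y) ⊗ₜ (c * q) := rfl

lemma rTensor_sliceR_counit_piDL (t : A ⊗[ℂ] B) (x y : A) (c : B) :
    rTensor B (sliceR H.counit) (H.piDL t ((x ⊗ₜ y) ⊗ₜ c)) =
      H.counit y • (t * (x ⊗ₜ c)) := by
  induction t using TensorProduct.induction_on with
  | zero => simp
  | tmul p q => simp [piDL_tmul_tmul, sliceR_counit_ΔL, TensorProduct.smul_tmul']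
  | add u v hu hv => simp only [map_add, LinearMap.add_apply, hu, hv, add_mul, smul_add]

lemma rTensor_sliceL_counit_piDR (t : A ⊗[ℂ] B) (x y : A) (c : B) :
    rTensor B (sliceL H.counit) (H.piDR t ((x ⊗ₜ y) ⊗ₜ c)) =
      H.counit x • ((y ⊗ₜ c) * t) := by
  induction t using TensorProduct.induction_on with
  | zero => simp
  | tmul p q => simp [piDR_tmul_tmul, sliceL_counit_ΔR, TensorProduct.smul_tmul']
  | add u v hu hv => simp only [map_add, LinearMap.add_apply, hu, hv, mul_add, smul_add]

lemma rTensor_mulAntipodeLeft_piDL (t : A ⊗[ℂ] B) (x y : A) (c : B) :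
    rTensor B H.mulAntipodeLeft (H.piDL t ((x ⊗ₜ y) ⊗ₜ c)) =
      (H.S x * y) ⊗ₜ (sliceL H.counit t * c) := by
  induction t using TensorProduct.induction_on with
  | zero => simp
  | tmul p q => simp [piDL_tmul_tmul, mulAntipodeLeft_ΔL, smul_mul_assoc, TensorProduct.smul_tmul]
  | add u v hu hv => simp only [map_add, LinearMap.add_apply, hu, hv, add_mul, tmul_add]

lemma rTensor_mulAntipodeRight_piDR (t : A ⊗[ℂ] B) (x y : A) (c : B) :
    rTensor B H.mulAntipodeRight (H.piDR t ((x ⊗ₜ y) ⊗ₜ c)) =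
      (x * H.S y) ⊗ₜ (c * sliceL H.counit t) := by
  induction t using TensorProduct.induction_on with
  | zero => simp
  | tmul p q => simp [piDR_tmul_tmul, mulAntipodeRight_ΔR, mul_smul_comm, TensorProduct.smul_tmul]
  | add u v hu hv => simp only [map_add, LinearMap.add_apply, hu, hv, mul_add, tmul_add]

variable {V : Mult (A ⊗[ℂ] B)}

/-- For `w = (1 ⊗ b) V (x ⊗ 1)`:
`(S ⊙ ι)(w) t = (1 ⊗ b) (m(S ⊙ ι) ⊙ ι)(V₁₃ (x ⊗ t))`. -/
lemma map_antipode_mul_of_forall_mul_eq (hB : ∀ b : B, (∀ b' : B, b * b' = 0) → b = 0)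
    {w : A ⊗[ℂ] B} {x : A} {b : B}
    (hw : ∀ z, w * z = map id (mulLeft ℂ b) (V.L (map (mulLeft ℂ x) id z)))
    (t : A ⊗[ℂ] B) :
    map H.S.toLinearMap id w * t =
      map id (mulLeft ℂ b) (rTensor B H.mulAntipodeLeft (leg13 V.L (insertLeg1 x t))) := by
  induction t using TensorProduct.induction_on with
  | zero => simp
  | add t t' ht ht' => simp only [mul_add, map_add, ht, ht']
  | tmul y c =>
    have hwc := V.map_id_mulRight_of_forall_mul_eq H.nondeg_l hB hw c
    calc map H.S.toLinearMap id w * (y ⊗ₜ c)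
        = map (mulRight ℂ y) id (map H.S.toLinearMap id (map id (mulRight ℂ c) w)) := by
          simp only [mul_tmul_eq_map, map_map, id_comp, comp_id]
      _ = map (mulRight ℂ y) id
            (map H.S.toLinearMap id (map id (mulLeft ℂ b) (V.L (x ⊗ₜ c)))) := by
          rw [hwc]
      _ = _ := by
          rw [insertLeg1_tmul, leg13_tmul, rTensor_mulAntipodeLeft_insertLeg2]
          simp only [map_map, id_comp, comp_id]

/-- For `w = (x ⊗ 1) V (1 ⊗ b)`:
`t (S ⊙ ι)(w) = (m(ι ⊙ S) ⊙ ι)((t₁ ⊗ x ⊗ t₂) V₂₃) (1 ⊗ b)`. -/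
lemma mul_map_antipode_of_forall_mul_eq (hB : ∀ b : B, (∀ b' : B, b' * b = 0) → b = 0)
    {w : A ⊗[ℂ] B} {x : A} {b : B}
    (hw : ∀ z, z * w = map id (mulRight ℂ b) (V.R (map (mulRight ℂ x) id z)))
    (t : A ⊗[ℂ] B) :
    t * map H.S.toLinearMap id w =
      map id (mulRight ℂ b) (rTensor B H.mulAntipodeRight (leg23 V.R (insertLeg2 x t))) := by
  induction t using TensorProduct.induction_on with
  | zero => simp
  | add t t' ht ht' => simp only [add_mul, map_add, ht, ht']
  | tmul y c =>
    have hwc := V.map_id_mulLeft_of_forall_mul_eq H.nondeg_r hB hw c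
    calc (y ⊗ₜ c) * map H.S.toLinearMap id w
        = map (mulLeft ℂ y) id (map H.S.toLinearMap id (map id (mulLeft ℂ c) w)) := by
          simp only [tmul_mul_eq_map, map_map, id_comp, comp_id]
      _ = map (mulLeft ℂ y) id
            (map H.S.toLinearMap id (map id (mulRight ℂ b) (V.R (x ⊗ₜ c)))) := by
          rw [hwc]
      _ = _ := by
          rw [insertLeg2_tmul, leg23_tmul, rTensor_mulAntipodeRight_insertLeg1]
          simp only [map_map, id_comp, comp_id]

end AQG

namespace AQG.IsCorep

variable {A : Type*} [NonUnitalRing A] [Module ℂ A] [SMulCommClass ℂ A A]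
  [IsScalarTower ℂ A A] {H : AQG A}
  {B : Type*} [NonUnitalRing B] [Module ℂ B] [SMulCommClass ℂ B B] [IsScalarTower ℂ B B]
  {V : Mult (A ⊗[ℂ] B)} (hV : H.IsCorep V)
include hV

lemma rTensor_sliceR_counit_leg23_L (hinj : Function.Injective V.L) (u : A ⊗[ℂ] A) (q c : B) :
    rTensor B (sliceR H.counit) (leg23 V.L (u ⊗ₜ (q * c))) =
      rTensor B (sliceR H.counit) (u ⊗ₜ (q * c)) := by
  refine LinearMap.congr_fun (H.ext_ΔL
    (f := rTensor B (sliceR H.counit) ∘ₗ leg23 V.L ∘ₗ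
      (TensorProduct.mk ℂ _ B).flip (q * c))
    (g := rTensor B (sliceR H.counit) ∘ₗ (TensorProduct.mk ℂ _ B).flip (q * c))
    fun p x y => ?_) u
  simp only [comp_apply, flip_apply, mk_apply, ← piDL_tmul_tmul]
  apply hinj
  rw [← rTensor_sliceR_counit_leg13, ← hV.1, rTensor_sliceR_counit_piDL,
    rTensor_sliceR_counit_piDL, map_smul, V.Lmul]

lemma rTensor_sliceL_counit_leg13_R (hinj : Function.Injective V.R) (u : A ⊗[ℂ] A) (c q : B) :
    rTensor B (sliceL H.counit) (leg13 V.R (u ⊗ₜ (c * q))) =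
      rTensor B (sliceL H.counit) (u ⊗ₜ (c * q)) := by
  refine LinearMap.congr_fun (H.ext_ΔR
    (f := rTensor B (sliceL H.counit) ∘ₗ leg13 V.R ∘ₗ
      (TensorProduct.mk ℂ _ B).flip (c * q))
    (g := rTensor B (sliceL H.counit) ∘ₗ (TensorProduct.mk ℂ _ B).flip (c * q))
    fun p x y => ?_) u
  simp only [comp_apply, flip_apply, mk_apply, ← piDR_tmul_tmul]
  apply hinj
  rw [← rTensor_sliceL_counit_leg23, ← hV.2, rTensor_sliceL_counit_piDR,
    rTensor_sliceL_counit_piDR, map_smul, V.Rmul]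

/-- `(ε ⊙ ι)(V) = 1`, tested against `c`. -/
lemma sliceL_counit_L_mul (hB : ∀ b : B, (∀ b' : B, b * b' = 0) → b = 0)
    (hinj : Function.Injective V.L) (p : A) (q c : B) :
    sliceL H.counit (V.L (p ⊗ₜ q)) * c = H.counit p • (q * c) := by
  obtain ⟨e, he⟩ := H.exists_counit_ne_zero
  have h := hV.rTensor_sliceR_counit_leg23_L hinj (e ⊗ₜ p) q c
  rw [leg23_tmul, rTensor_sliceR_counit_insertLeg1, rTensor_tmul, sliceR_tmul,
    TensorProduct.smul_tmul] at h
  rw [← mulRight_apply (R := ℂ), ← sliceL_map_id_right, ← V.L_map_id_mulRight H.nondeg_l hB]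
  exact tmul_right_injective_of_ne_zero (x := e) (fun h0 => he (by rw [h0, map_zero])) h

lemma mul_sliceL_counit_R (hB : ∀ b : B, (∀ b' : B, b' * b = 0) → b = 0)
    (hinj : Function.Injective V.R) (p : A) (c q : B) :
    c * sliceL H.counit (V.R (p ⊗ₜ q)) = H.counit p • (c * q) := by
  obtain ⟨e, he⟩ := H.exists_counit_ne_zero
  have h := hV.rTensor_sliceL_counit_leg13_R hinj (p ⊗ₜ e) c q
  rw [leg13_tmul, rTensor_sliceL_counit_insertLeg2, rTensor_tmul, sliceL_tmul,
    TensorProduct.smul_tmul] at h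
  rw [← mulLeft_apply (R := ℂ), ← sliceL_map_id_right, ← V.R_map_id_mulLeft H.nondeg_r hB]
  exact tmul_right_injective_of_ne_zero (x := e) (fun h0 => he (by rw [h0, map_zero])) h

lemma rTensor_mulAntipodeLeft_leg13_leg23 (hB : ∀ b : B, (∀ b' : B, b * b' = 0) → b = 0)
    (hinj : Function.Injective V.L) (u : A ⊗[ℂ] A) (q c : B) :
    rTensor B H.mulAntipodeLeft (leg13 V.L (leg23 V.L (u ⊗ₜ (q * c)))) =
      rTensor B H.mulAntipodeLeft (u ⊗ₜ (q * c)) := by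
  refine LinearMap.congr_fun (H.ext_ΔL
    (f := rTensor B H.mulAntipodeLeft ∘ₗ leg13 V.L ∘ₗ leg23 V.L ∘ₗ
      (TensorProduct.mk ℂ _ B).flip (q * c))
    (g := rTensor B H.mulAntipodeLeft ∘ₗ (TensorProduct.mk ℂ _ B).flip (q * c))
    fun p x y => ?_) u
  simp only [comp_apply, flip_apply, mk_apply, ← piDL_tmul_tmul]
  rw [← hV.1, rTensor_mulAntipodeLeft_piDL, rTensor_mulAntipodeLeft_piDL,
    hV.sliceL_counit_L_mul hB hinj, sliceL_tmul, smul_mul_assoc]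

lemma rTensor_mulAntipodeRight_leg23_leg13 (hB : ∀ b : B, (∀ b' : B, b' * b = 0) → b = 0)
    (hinj : Function.Injective V.R) (u : A ⊗[ℂ] A) (c q : B) :
    rTensor B H.mulAntipodeRight (leg23 V.R (leg13 V.R (u ⊗ₜ (c * q)))) =
      rTensor B H.mulAntipodeRight (u ⊗ₜ (c * q)) := by
  refine LinearMap.congr_fun (H.ext_ΔR
    (f := rTensor B H.mulAntipodeRight ∘ₗ leg23 V.R ∘ₗ leg13 V.R ∘ₗ
      (TensorProduct.mk ℂ _ B).flip (c * q))
    (g := rTensor B H.mulAntipodeRight ∘ₗ (TensorProduct.mk ℂ _ B).flip (c * q))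
    fun p x y => ?_) u
  simp only [comp_apply, flip_apply, mk_apply, ← piDR_tmul_tmul]
  rw [← hV.2, rTensor_mulAntipodeRight_piDR, rTensor_mulAntipodeRight_piDR,
    hV.mul_sliceL_counit_R hB hinj, sliceL_tmul, mul_smul_comm]

lemma R_map_antipode_of_forall_mul_eq (hB : ∀ b : B, (∀ b' : B, b * b' = 0) → b = 0)
    (hinj : Function.Injective V.L) {w : A ⊗[ℂ] B} {x : A} {b : B}
    (hw : ∀ z, w * z = map id (mulLeft ℂ b) (V.L (map (mulLeft ℂ x) id z))) :
    V.R (map H.S.toLinearMap id w) = H.S x ⊗ₜ b := by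
  refine eq_of_forall_mul_tmul_mul H.nondeg_l hB fun y z z' => ?_
  rw [V.mid, H.map_antipode_mul_of_forall_mul_eq hB hw, ← leg23_tmul V.L,
    hV.rTensor_mulAntipodeLeft_leg13_leg23 hB hinj]
  simp [Algebra.TensorProduct.tmul_mul_tmul]

lemma L_map_antipode_of_forall_mul_eq (hB : ∀ b : B, (∀ b' : B, b' * b = 0) → b = 0)
    (hinj : Function.Injective V.R) {w : A ⊗[ℂ] B} {x : A} {b : B}
    (hw : ∀ z, z * w = map id (mulRight ℂ b) (V.R (map (mulRight ℂ x) id z))) :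
    V.L (map H.S.toLinearMap id w) = H.S x ⊗ₜ b := by
  refine eq_of_forall_tmul_mul_mul H.nondeg_r hB fun y z z' => ?_
  rw [← V.mid, H.mul_map_antipode_of_forall_mul_eq hB hw, ← leg13_tmul V.R,
    hV.rTensor_mulAntipodeRight_leg23_leg13 hB hinj]
  simp [Algebra.TensorProduct.tmul_mul_tmul]

end AQG.IsCorep

/-- For a non-degenerate (invertible) corepresentation `V` of
`(A, Δ)` on `B`: `(S ⊙ ι)(V) = V⁻¹`, where `(S ⊙ ι)(V)` is the multiplier determined by
`(S ⊙ ι)(V)(a ⊗ b) = (S ⊙ ι)((S⁻¹(a) ⊗ 1) V (1 ⊗ b))` and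
`(a ⊗ b)(S ⊙ ι)(V) = (S ⊙ ι)((1 ⊗ b) V (S⁻¹(a) ⊗ 1))`. -/
theorem AQG.antipode_slice_inverse {A : Type*} [NonUnitalRing A] [Module ℂ A]
    [SMulCommClass ℂ A A] [IsScalarTower ℂ A A] (H : AQG A)
    {B : Type*} [NonUnitalRing B] [Module ℂ B]
    [SMulCommClass ℂ B B] [IsScalarTower ℂ B B]
    (hBl : ∀ b : B, (∀ b' : B, b * b' = 0) → b = 0)
    (hBr : ∀ b : B, (∀ b' : B, b' * b = 0) → b = 0)
    (V W : Mult (A ⊗[ℂ] B)) (hV : H.IsCorep V) (hW : V.Inverts W)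
    (u v : A → B → A ⊗[ℂ] B)
    -- `u a b = (S⁻¹(a) ⊗ 1) V (1 ⊗ b) ∈ A ⊙ B`
    (hu : ∀ (a : A) (b : B) (z : A ⊗[ℂ] B),
      u a b * z =
        TensorProduct.map (LinearMap.mulLeft ℂ (H.S.symm a)) LinearMap.id
          (V.L (TensorProduct.map LinearMap.id (LinearMap.mulLeft ℂ b) z)) ∧
      z * u a b =
        TensorProduct.map LinearMap.id (LinearMap.mulRight ℂ b)
          (V.R (TensorProduct.map (LinearMap.mulRight ℂ (H.S.symm a)) LinearMap.id z)))
    -- `v a b = (1 ⊗ b) V (S⁻¹(a) ⊗ 1) ∈ A ⊙ B`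
    (hv : ∀ (a : A) (b : B) (z : A ⊗[ℂ] B),
      v a b * z =
        TensorProduct.map LinearMap.id (LinearMap.mulLeft ℂ b)
          (V.L (TensorProduct.map (LinearMap.mulLeft ℂ (H.S.symm a)) LinearMap.id z)) ∧
      z * v a b =
        TensorProduct.map (LinearMap.mulRight ℂ (H.S.symm a)) LinearMap.id
          (V.R (TensorProduct.map LinearMap.id (LinearMap.mulRight ℂ b) z))) :
    ∀ (a : A) (b : B),
      W.L (a ⊗ₜ b) = TensorProduct.map H.S.toLinearMap LinearMap.id (u a b) ∧
      W.R (a ⊗ₜ b) = TensorProduct.map H.S.toLinearMap LinearMap.id (v a b) := by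
  intro a b
  have hL : Function.Injective V.L := Function.LeftInverse.injective hW.2.1
  have hR : Function.Injective V.R := Function.LeftInverse.injective hW.2.2.2
  have hVu : V.L (map H.S.toLinearMap id (u a b)) = a ⊗ₜ b := by
    simpa using hV.L_map_antipode_of_forall_mul_eq hBr hR fun z => (hu a b z).2
  have hVv : V.R (map H.S.toLinearMap id (v a b)) = a ⊗ₜ b := by
    simpa using hV.R_map_antipode_of_forall_mul_eq hBl hL fun z => (hv a b z).1
  exact ⟨by rw [← hVu, hW.2.1], by rw [← hVv, hW.2.2.2]⟩
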